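/- arXiv:1611.05796 — 3 statements merged into one kernel-verified Lean document; each statement's English description precedes it below -/
import Mathlib

section
/- For any rate matrix Q indexed by a nonempty finite set 𝒳 and any real Δ ≥ 0, one has ‖e^{QΔ} − (I + ΔQ)‖ ≤ Δ²‖Q‖². -/
open scoped BigOperators

/-- The operator norm of a matrix induced by the supremum norm on `X → ℝ`:
`‖A‖ = max_{x} Σ_{y} |A x y|`. -/
noncomputable def matNorm {X : Type*} [Fintype X] (A : Matrix X X ℝ) : ℝ :=
  ⨆ x, ∑ y, |A x y|

/-- A (transition) rate matrix: nonnegative off-diagonal entries, rows summing to zero. -/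
def IsRateMatrix {X : Type*} [Fintype X] (Q : Matrix X X ℝ) : Prop :=
  (∀ x y, x ≠ y → 0 ≤ Q x y) ∧ ∀ x, ∑ y, Q x y = 0

/-- The matrix exponential `e^A = Σ_{k≥0} A^k / k!`. -/
noncomputable def mexp {X : Type*} [Fintype X] [DecidableEq X] (A : Matrix X X ℝ) :
    Matrix X X ℝ :=
  ∑' k : ℕ, ((k.factorial : ℝ)⁻¹) • A ^ k

/-!
For a rate matrix `A` and `n ≥ ‖A‖`, the matrix `1 + A/n` has nonnegative entries and unit row
sums, so its norm is at most `1`. For such a contraction `S` a telescoping argument gives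
`‖Sⁿ - 1 - n(S - 1)‖ ≤ n²‖S - 1‖²`, which for `S = 1 + A/n` reads
`‖(1 + A/n)ⁿ - (1 + A)‖ ≤ ‖A‖²`. Since `(1 + x/n)ⁿ → eˣ` in every Banach algebra (compare with
`(e^{x/n})ⁿ`, the two factors differing by `O(1/n²)`), the bound passes to the limit.
-/

open NormedSpace Filter Topology
open scoped Nat

section PowBounds
variable {R : Type*} [NormedRing R]

theorem norm_pow_sub_pow_le {a b : R} {c : ℝ} (ha : ‖a‖ ≤ c) (hb : ‖b‖ ≤ c) (n : ℕ) :
    ‖a ^ n - b ^ n‖ ≤ n * c ^ (n - 1) * ‖a - b‖ := by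
  obtain _ | n := n
  · simp
  have hc : 0 ≤ c := (norm_nonneg a).trans ha
  induction n with
  | zero => simp
  | succ n ih =>
    have hsplit : a ^ (n + 2) - b ^ (n + 2)
        = a ^ (n + 1) * (a - b) + (a ^ (n + 1) - b ^ (n + 1)) * b := by
      rw [pow_succ _ (n + 1), pow_succ _ (n + 1)]; noncomm_ring
    have hpow : ‖a ^ (n + 1)‖ ≤ c ^ (n + 1) :=
      (norm_pow_le' a n.succ_pos).trans (pow_le_pow_left₀ (norm_nonneg a) ha _)
    calc ‖a ^ (n + 2) - b ^ (n + 2)‖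
        ≤ ‖a ^ (n + 1)‖ * ‖a - b‖ + ‖a ^ (n + 1) - b ^ (n + 1)‖ * ‖b‖ := by
          rw [hsplit]
          exact (norm_add_le _ _).trans (add_le_add (norm_mul_le _ _) (norm_mul_le _ _))
      _ ≤ c ^ (n + 1) * ‖a - b‖ + ((n + 1 : ℕ) * c ^ n * ‖a - b‖) * c := by
          gcongr
          simpa using ih
      _ = (n + 2 : ℕ) * c ^ (n + 2 - 1) * ‖a - b‖ := by
          push_cast
          ring

theorem norm_one_add_pow_sub_one_sub_nsmul_le [NormOneClass R] {y : R} (hy : ‖1 + y‖ ≤ 1)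
    (n : ℕ) : ‖(1 + y) ^ n - 1 - n • y‖ ≤ n ^ 2 * ‖y‖ ^ 2 := by
  induction n with
  | zero => simp
  | succ n ih =>
    have hsplit : (1 + y) ^ (n + 1) - 1 - (n + 1) • y
        = ((1 + y) ^ n - 1 - n • y) + ((1 + y) ^ n - 1 ^ n) * y := by
      rw [pow_succ, succ_nsmul, one_pow]
      noncomm_ring
    have hpow : ‖(1 + y) ^ n - 1 ^ n‖ ≤ n * ‖y‖ := by
      simpa using norm_pow_sub_pow_le hy norm_one.le n
    calc ‖(1 + y) ^ (n + 1) - 1 - (n + 1) • y‖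
        ≤ n ^ 2 * ‖y‖ ^ 2 + (n * ‖y‖) * ‖y‖ := by
          rw [hsplit]
          exact (norm_add_le _ _).trans (add_le_add ih ((norm_mul_le _ _).trans (by gcongr)))
      _ ≤ ((n + 1 : ℕ) : ℝ) ^ 2 * ‖y‖ ^ 2 := by
          push_cast
          nlinarith [sq_nonneg ‖y‖, (n.cast_nonneg : (0 : ℝ) ≤ n)]

end PowBounds

section ExpBounds
variable {𝔸 : Type*} [NormedRing 𝔸] [NormedAlgebra ℝ 𝔸] [CompleteSpace 𝔸]

theorem exp_nsmul_eq_pow (n : ℕ) (x : 𝔸) : exp (n • x) = exp x ^ n := by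
  have hball : ∀ z : 𝔸, z ∈ Metric.eball (0 : 𝔸) (expSeries ℝ 𝔸).radius := fun z => by
    simp [expSeries_radius_eq_top]
  induction n with
  | zero => simp
  | succ n ih =>
    rw [succ_nsmul, exp_add_of_commute_of_mem_ball (𝕂 := ℝ) ((Commute.refl x).smul_left n)
      (hball _) (hball _), ih, pow_succ]

variable [NormOneClass 𝔸]

theorem norm_exp_sub_sum_range_le (x : 𝔸) (m : ℕ) :
    ‖exp x - ∑ k ∈ Finset.range m, (k !⁻¹ : ℝ) • x ^ k‖ ≤ ‖x‖ ^ m * Real.exp ‖x‖ := by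
  have hsum := expSeries_summable' (𝕂 := ℝ) x
  rw [congrFun (exp_eq_tsum ℝ) x, ← hsum.sum_add_tsum_nat_add m, add_sub_cancel_left]
  have hreal : HasSum (fun k => ‖x‖ ^ m * (‖x‖ ^ k / k !)) (‖x‖ ^ m * Real.exp ‖x‖) := by
    rw [Real.exp_eq_exp_ℝ]
    exact (expSeries_div_hasSum_exp ‖x‖).mul_left _
  refine tsum_of_norm_bounded hreal fun k => ?_
  have hfact : ((k + m) ! : ℝ)⁻¹ ≤ (k ! : ℝ)⁻¹ := by
    gcongr
    exact Nat.le_add_right k m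
  calc ‖((k + m) !⁻¹ : ℝ) • x ^ (k + m)‖ ≤ ((k + m) !⁻¹ : ℝ) * ‖x‖ ^ (k + m) := by
        rw [norm_smul, Real.norm_of_nonneg (by positivity)]
        gcongr
        exact norm_pow_le x _
    _ ≤ (k !⁻¹ : ℝ) * ‖x‖ ^ (k + m) := by gcongr
    _ = ‖x‖ ^ m * (‖x‖ ^ k / k !) := by ring

theorem norm_exp_le_exp_norm (x : 𝔸) : ‖exp x‖ ≤ Real.exp ‖x‖ := by
  simpa using norm_exp_sub_sum_range_le x 0

theorem norm_exp_sub_one_sub_le (x : 𝔸) : ‖exp x - 1 - x‖ ≤ ‖x‖ ^ 2 * Real.exp ‖x‖ := by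
  simpa [Finset.sum_range_succ, sub_sub] using norm_exp_sub_sum_range_le x 2

theorem norm_one_add_inv_smul_pow_sub_exp_le (x : 𝔸) {n : ℕ} (hn : n ≠ 0) :
    ‖(1 + (n : ℝ)⁻¹ • x) ^ n - exp x‖ ≤ (‖x‖ * Real.exp ‖x‖) ^ 2 / n := by
  set y := (n : ℝ)⁻¹ • x
  have hn' : (0 : ℝ) < n := by positivity
  have hy : ‖y‖ = ‖x‖ / n := by
    rw [norm_smul, Real.norm_of_nonneg (by positivity), inv_mul_eq_div]
  have hexp : exp x = exp y ^ n := by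
    rw [← exp_nsmul_eq_pow, ← Nat.cast_smul_eq_nsmul ℝ, smul_inv_smul₀ hn'.ne']
  have hexp_y : Real.exp ‖y‖ ^ n = Real.exp ‖x‖ := by
    rw [← Real.exp_nat_mul, hy, mul_div_cancel₀ _ hn'.ne']
  have hone_add : ‖1 + y‖ ≤ Real.exp ‖y‖ :=
    (norm_add_le _ _).trans (by rw [norm_one, add_comm]; exact Real.add_one_le_exp _)
  have hexp_norm : Real.exp ‖y‖ ≤ Real.exp ‖x‖ := by
    rw [hy]
    gcongr
    exact div_le_self (norm_nonneg x) (Nat.one_le_cast.2 (Nat.one_le_iff_ne_zero.2 hn))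
  rw [hexp]
  calc ‖(1 + y) ^ n - exp y ^ n‖
      ≤ n * Real.exp ‖y‖ ^ (n - 1) * ‖exp y - 1 - y‖ := by
        rw [sub_sub, norm_sub_rev (exp y)]
        exact norm_pow_sub_pow_le hone_add (norm_exp_le_exp_norm y) n
    _ ≤ n * Real.exp ‖x‖ * (‖y‖ ^ 2 * Real.exp ‖x‖) := by
        gcongr
        · rw [← hexp_y]
          exact pow_le_pow_right₀ (Real.one_le_exp (norm_nonneg y)) (n.sub_le 1)
        · exact (norm_exp_sub_one_sub_le y).trans (by gcongr)
    _ = (‖x‖ * Real.exp ‖x‖) ^ 2 / n := by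
        rw [hy]
        field_simp

theorem tendsto_one_add_inv_smul_pow_exp (x : 𝔸) :
    Tendsto (fun n : ℕ => (1 + (n : ℝ)⁻¹ • x) ^ n) atTop (𝓝 (exp x)) := by
  rw [tendsto_iff_norm_sub_tendsto_zero]
  refine squeeze_zero' (Eventually.of_forall fun n => norm_nonneg _) ?_
    (tendsto_const_div_atTop_nhds_zero_nat ((‖x‖ * Real.exp ‖x‖) ^ 2))
  filter_upwards [eventually_ne_atTop 0] with n hn
  exact norm_one_add_inv_smul_pow_sub_exp_le x hn

end ExpBounds

attribute [local instance] Matrix.linftyOpNormedAddCommGroup Matrix.linftyOpNormedRing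
  Matrix.linftyOpNormedAlgebra

namespace Matrix

variable {m n α : Type*} [Fintype m] [Fintype n] [NormedAddCommGroup α]

theorem sum_norm_le_linfty_opNorm (A : Matrix m n α) (i : m) :
    ∑ j, ‖A i j‖ ≤ ‖A‖ := by
  rw [linfty_opNorm_def]
  have := NNReal.coe_le_coe.2 (Finset.le_sup (f := fun i => ∑ j, ‖A i j‖₊) (Finset.mem_univ i))
  simpa using this

theorem linfty_opNorm_le_of_forall_sum_norm_le {A : Matrix m n α} {c : ℝ}
    (hc : 0 ≤ c) (h : ∀ i, ∑ j, ‖A i j‖ ≤ c) : ‖A‖ ≤ c := by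
  lift c to NNReal using hc
  rw [linfty_opNorm_def, NNReal.coe_le_coe]
  refine Finset.sup_le fun i _ => ?_
  rw [← NNReal.coe_le_coe]
  simpa using h i

end Matrix

section RateMatrix

variable {X : Type*} [Fintype X]

theorem matNorm_eq_norm (A : Matrix X X ℝ) : matNorm A = ‖A‖ := by
  rw [matNorm, Matrix.linfty_opNorm_def, Finset.sup_univ_eq_ciSup, NNReal.coe_iSup]
  simp [Real.norm_eq_abs]

theorem mexp_eq_exp [DecidableEq X] (A : Matrix X X ℝ) : mexp A = exp A := by
  rw [mexp, congrFun (exp_eq_tsum ℝ) A]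

theorem IsRateMatrix.smul {Q : Matrix X X ℝ} (hQ : IsRateMatrix Q) {c : ℝ} (hc : 0 ≤ c) :
    IsRateMatrix (c • Q) :=
  ⟨fun x y hxy => mul_nonneg hc (hQ.1 x y hxy), fun x => by
    simp only [Matrix.smul_apply, smul_eq_mul, ← Finset.mul_sum, hQ.2 x, mul_zero]⟩

theorem IsRateMatrix.norm_one_add_le_one [DecidableEq X] {A : Matrix X X ℝ}
    (hA : IsRateMatrix A) (h : ‖A‖ ≤ 1) : ‖1 + A‖ ≤ 1 := by
  refine Matrix.linfty_opNorm_le_of_forall_sum_norm_le zero_le_one fun x => ?_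
  have hnonneg : ∀ y, 0 ≤ (1 + A) x y := by
    intro y
    rcases eq_or_ne x y with rfl | hxy
    · have hdiag : ‖A x x‖ ≤ 1 :=
        (Finset.single_le_sum (fun y _ => norm_nonneg (A x y)) (Finset.mem_univ x)).trans
          ((Matrix.sum_norm_le_linfty_opNorm A x).trans h)
      simp only [Matrix.add_apply, Matrix.one_apply_eq]
      linarith [neg_abs_le (A x x), Real.norm_eq_abs (A x x)]
    · simpa [Matrix.one_apply_ne hxy] using hA.1 x y hxy
  refine le_of_eq ?_
  calc ∑ y, ‖(1 + A) x y‖ = ∑ y, (1 + A) x y :=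
        Finset.sum_congr rfl fun y _ => Real.norm_of_nonneg (hnonneg y)
    _ = 1 := by simp [Finset.sum_add_distrib, hA.2 x, Matrix.one_apply]

theorem IsRateMatrix.norm_one_add_inv_smul_pow_sub_le [DecidableEq X] [Nonempty X]
    {A : Matrix X X ℝ} (hA : IsRateMatrix A) {n : ℕ} (hn : ‖A‖ ≤ n) (hn0 : n ≠ 0) :
    ‖(1 + (n : ℝ)⁻¹ • A) ^ n - (1 + A)‖ ≤ ‖A‖ ^ 2 := by
  have hn' : (0 : ℝ) < n := by positivity
  have hstep : ‖(n : ℝ)⁻¹ • A‖ ≤ 1 := by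
    rw [norm_smul, Real.norm_of_nonneg (by positivity), inv_mul_le_one₀ hn']
    exact hn
  have hsmul : n • ((n : ℝ)⁻¹ • A) = A := by
    rw [← Nat.cast_smul_eq_nsmul ℝ, smul_inv_smul₀ hn'.ne']
  have hstochastic : ‖1 + (n : ℝ)⁻¹ • A‖ ≤ 1 :=
    (hA.smul (by positivity)).norm_one_add_le_one hstep
  calc ‖(1 + (n : ℝ)⁻¹ • A) ^ n - (1 + A)‖
      = ‖(1 + (n : ℝ)⁻¹ • A) ^ n - 1 - n • ((n : ℝ)⁻¹ • A)‖ := by rw [hsmul, sub_sub]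
    _ ≤ n ^ 2 * ‖(n : ℝ)⁻¹ • A‖ ^ 2 := norm_one_add_pow_sub_one_sub_nsmul_le hstochastic n
    _ = ‖A‖ ^ 2 := by
        rw [norm_smul, Real.norm_of_nonneg (by positivity)]
        field_simp

end RateMatrix

theorem stmt4 {X : Type*} [Fintype X] [Nonempty X] [DecidableEq X]
    (Q : Matrix X X ℝ) (hQ : IsRateMatrix Q) (Δ : ℝ) (hΔ : 0 ≤ Δ) :
    matNorm (mexp (Δ • Q) - (1 + Δ • Q)) ≤ Δ ^ 2 * matNorm Q ^ 2 := by
  have hA : IsRateMatrix (Δ • Q) := hQ.smul hΔ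
  have hrhs : Δ ^ 2 * matNorm Q ^ 2 = ‖Δ • Q‖ ^ 2 := by
    rw [matNorm_eq_norm, norm_smul, Real.norm_of_nonneg hΔ, mul_pow]
  rw [mexp_eq_exp, matNorm_eq_norm, hrhs]
  refine le_of_tendsto ((tendsto_one_add_inv_smul_pow_exp (Δ • Q)).sub_const (1 + Δ • Q)).norm ?_
  filter_upwards [eventually_ge_atTop ⌈‖Δ • Q‖⌉₊, eventually_ne_atTop 0] with n hn hn0
  exact hA.norm_one_add_inv_smul_pow_sub_le ((Nat.le_ceil _).trans (by exact_mod_cast hn)) hn0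
end

section
/- Let 𝒬 be a nonempty bounded set of rate matrices indexed by a nonempty finite set 𝒳, let Q̲ be its lower envelope (defined by [Q̲f](x) := inf{[Qf](x) : Q ∈ 𝒬}), and let δ > 0 be such that δ‖Q̲‖ ≤ 1, where ‖Q̲‖ := sup{‖Q̲f‖ : ‖f‖ = 1}. Fix n ∈ ℕ and, for each i ∈ {1,…,n}, reals Δ_i with 0 ≤ Δ_i ≤ δ and matrices Q_i ∈ 𝒬. Then for every f ∈ ℝ^𝒳, (I+Δ_1Q_1)(I+Δ_2Q_2)⋯(I+Δ_nQ_n)f ≥ (I+Δ_1Q̲)∘(I+Δ_2Q̲)∘⋯∘(I+Δ_nQ̲) f, where the inequality between functions holds pointwise and the operators are composed in the given order. -/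
noncomputable def lowerEnvOp {X : Type*} [Fintype X]
    (𝒬 : Set (Matrix X X ℝ)) : (X → ℝ) → (X → ℝ) :=
  fun f x => ⨅ Q : 𝒬, (Q : Matrix X X ℝ).mulVec f x

noncomputable def opNorm {X : Type*} [Fintype X] (A : (X → ℝ) → (X → ℝ)) : ℝ :=
  ⨆ f : {f : X → ℝ // ‖f‖ = 1}, ‖A f.1‖

def compFamily {X : Type*} {n : ℕ} (T : Fin n → ((X → ℝ) → (X → ℝ))) :
    (X → ℝ) → (X → ℝ) :=
  (List.ofFn T).foldr (· ∘ ·) id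

open Matrix

section Matrix

variable {X : Type*} [Fintype X]

lemma matNorm_nonneg (A : Matrix X X ℝ) : 0 ≤ matNorm A :=
  Real.iSup_nonneg fun _ => Finset.sum_nonneg fun _ _ => abs_nonneg _

lemma opNorm_nonneg (A : (X → ℝ) → (X → ℝ)) : 0 ≤ opNorm A :=
  Real.iSup_nonneg fun _ => norm_nonneg _

lemma sum_abs_le_matNorm (A : Matrix X X ℝ) (x : X) : ∑ y, |A x y| ≤ matNorm A :=
  le_ciSup (f := fun x => ∑ y, |A x y|) (Set.finite_range _).bddAbove x

lemma abs_mulVec_apply_le (A : Matrix X X ℝ) (f : X → ℝ) (x : X) :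
    |(A *ᵥ f) x| ≤ matNorm A * ‖f‖ :=
  calc |(A *ᵥ f) x| ≤ ∑ y, |A x y| * |f y| := by
        simpa only [mulVec, dotProduct, abs_mul] using
          Finset.abs_sum_le_sum_abs (fun y => A x y * f y) Finset.univ
    _ ≤ ∑ y, |A x y| * ‖f‖ := by
        gcongr with y
        exact Real.norm_eq_abs (f y) ▸ norm_le_pi_norm f y
    _ ≤ matNorm A * ‖f‖ := by
        rw [← Finset.sum_mul]
        exact mul_le_mul_of_nonneg_right (sum_abs_le_matNorm A x) (norm_nonneg f)

lemma monotone_mulVec_of_nonneg {A : Matrix X X ℝ} (hA : ∀ x y, 0 ≤ A x y) :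
    Monotone (A *ᵥ ·) :=
  fun _ _ huv x => dotProduct_le_dotProduct_of_nonneg_left huv (hA x)

lemma monotone_add_smul_mulVec {Q : Matrix X X ℝ} {Δ : ℝ}
    (hoff : ∀ x y, x ≠ y → 0 ≤ Q x y) (hΔ : 0 ≤ Δ) (hdiag : ∀ x, -1 ≤ Δ * Q x x) :
    Monotone fun g : X → ℝ => g + Δ • Q *ᵥ g := by
  classical
  have hnonneg : ∀ x y, 0 ≤ (1 + Δ • Q) x y := by
    intro x y
    rcases eq_or_ne x y with rfl | hxy
    · simpa [add_comm, ← neg_le_iff_add_nonneg'] using neg_le.1 (hdiag x)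
    · simpa [one_apply_ne hxy] using mul_nonneg hΔ (hoff x y hxy)
  simpa only [add_mulVec, one_mulVec, smul_mulVec] using monotone_mulVec_of_nonneg hnonneg

end Matrix

section LowerEnvelope

variable {X : Type*} [Fintype X] {𝒬 : Set (Matrix X X ℝ)}

lemma abs_mulVec_apply_le_of_mem_upperBounds {M : ℝ} (hM : M ∈ upperBounds (matNorm '' 𝒬))
    {Q : Matrix X X ℝ} (hQ : Q ∈ 𝒬) (g : X → ℝ) (x : X) : |(Q *ᵥ g) x| ≤ M * ‖g‖ :=
  (abs_mulVec_apply_le Q g x).trans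
    (mul_le_mul_of_nonneg_right (hM ⟨Q, hQ, rfl⟩) (norm_nonneg g))

lemma lowerEnvOp_le_mulVec (hbdd : BddAbove (matNorm '' 𝒬)) {Q : Matrix X X ℝ} (hQ : Q ∈ 𝒬)
    (g : X → ℝ) : lowerEnvOp 𝒬 g ≤ Q *ᵥ g := by
  obtain ⟨M, hM⟩ := hbdd
  intro x
  refine ciInf_le ⟨-(M * ‖g‖), ?_⟩ (⟨Q, hQ⟩ : 𝒬)
  rintro _ ⟨⟨Q', hQ'⟩, rfl⟩
  exact neg_le_of_abs_le (abs_mulVec_apply_le_of_mem_upperBounds hM hQ' g x)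

lemma abs_lowerEnvOp_apply_le_of_mem_upperBounds {M : ℝ} (hM : M ∈ upperBounds (matNorm '' 𝒬))
    (hne : 𝒬.Nonempty) (g : X → ℝ) (x : X) : |lowerEnvOp 𝒬 g x| ≤ M * ‖g‖ := by
  obtain ⟨Q₀, hQ₀⟩ := hne
  have : Nonempty 𝒬 := ⟨⟨Q₀, hQ₀⟩⟩
  refine abs_le.2 ⟨le_ciInf fun ⟨Q, hQ⟩ => ?_, ?_⟩
  · exact neg_le_of_abs_le (abs_mulVec_apply_le_of_mem_upperBounds hM hQ g x)
  · exact (lowerEnvOp_le_mulVec ⟨M, hM⟩ hQ₀ g x).trans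
      (le_of_abs_le (abs_mulVec_apply_le_of_mem_upperBounds hM hQ₀ g x))

lemma norm_lowerEnvOp_le_opNorm (hbdd : BddAbove (matNorm '' 𝒬)) (hne : 𝒬.Nonempty)
    {g : X → ℝ} (hg : ‖g‖ = 1) : ‖lowerEnvOp 𝒬 g‖ ≤ opNorm (lowerEnvOp 𝒬) := by
  obtain ⟨M, hM⟩ := hbdd
  have hM0 : 0 ≤ M := (matNorm_nonneg _).trans (hM ⟨_, hne.some_mem, rfl⟩)
  refine le_ciSup (f := fun f : {f : X → ℝ // ‖f‖ = 1} => ‖lowerEnvOp 𝒬 f.1‖) ⟨M, ?_⟩ ⟨g, hg⟩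
  rintro _ ⟨⟨f, hf⟩, rfl⟩
  refine (pi_norm_le_iff_of_nonneg hM0).2 fun x => ?_
  simpa [hf] using abs_lowerEnvOp_apply_le_of_mem_upperBounds hM hne f x

lemma neg_opNorm_lowerEnvOp_le_diag (hbdd : BddAbove (matNorm '' 𝒬)) {Q : Matrix X X ℝ}
    (hQ : Q ∈ 𝒬) (x : X) : -opNorm (lowerEnvOp 𝒬) ≤ Q x x := by
  classical
  let e : X → ℝ := Pi.single x 1
  have he : ‖e‖ = 1 := by simp [e, Pi.norm_single]
  calc -opNorm (lowerEnvOp 𝒬) ≤ -‖lowerEnvOp 𝒬 e‖ :=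
        neg_le_neg (norm_lowerEnvOp_le_opNorm hbdd ⟨Q, hQ⟩ he)
    _ ≤ lowerEnvOp 𝒬 e x := neg_le.1 <|
        (neg_le_abs _).trans (Real.norm_eq_abs (lowerEnvOp 𝒬 e x) ▸ norm_le_pi_norm _ x)
    _ ≤ (Q *ᵥ e) x := lowerEnvOp_le_mulVec hbdd hQ e x
    _ = Q x x := by simp [e, mulVec_single]

end LowerEnvelope

section Composition

variable {X : Type*}

lemma compFamily_succ {n : ℕ} (T : Fin (n + 1) → (X → ℝ) → (X → ℝ)) :
    compFamily T = T 0 ∘ compFamily (fun i => T i.succ) := by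
  simp [compFamily, List.ofFn_succ]

lemma compFamily_le_compFamily {n : ℕ} {S T : Fin n → (X → ℝ) → (X → ℝ)}
    (hT : ∀ i, Monotone (T i)) (hST : ∀ i, S i ≤ T i) : compFamily S ≤ compFamily T := by
  induction n with
  | zero => exact le_rfl
  | succ n ih =>
    intro f
    rw [compFamily_succ S, compFamily_succ T]
    exact (hST 0 _).trans (hT 0 (ih (fun i => hT i.succ) (fun i => hST i.succ) f))

end Composition

theorem stmt15_general {X : Type*} [Fintype X]
    (𝒬 : Set (Matrix X X ℝ))
    (hrate : ∀ Q ∈ 𝒬, IsRateMatrix Q)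
    (hbdd : BddAbove (matNorm '' 𝒬))
    (δ : ℝ) (hδQ : δ * opNorm (lowerEnvOp 𝒬) ≤ 1)
    {n : ℕ} (Δ : Fin n → ℝ) (hΔ0 : ∀ i, 0 ≤ Δ i) (hΔδ : ∀ i, Δ i ≤ δ)
    (Qs : Fin n → Matrix X X ℝ) (hQs : ∀ i, Qs i ∈ 𝒬)
    (f : X → ℝ) (x : X) :
    compFamily (fun i => fun g => g + Δ i • lowerEnvOp 𝒬 g) f x ≤
      compFamily (fun i => fun g => g + Δ i • (Qs i).mulVec g) f x := by
  refine compFamily_le_compFamily (fun i => ?_) (fun i g => ?_) f x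
  · refine monotone_add_smul_mulVec (hrate _ (hQs i)).1 (hΔ0 i) fun y => ?_
    have hΔQ : Δ i * opNorm (lowerEnvOp 𝒬) ≤ 1 :=
      (mul_le_mul_of_nonneg_right (hΔδ i) (opNorm_nonneg _)).trans hδQ
    linarith [mul_le_mul_of_nonneg_left (neg_opNorm_lowerEnvOp_le_diag hbdd (hQs i) y) (hΔ0 i)]
  · exact add_le_add_right (smul_le_smul_of_nonneg_left (lowerEnvOp_le_mulVec hbdd (hQs i) g)
      (hΔ0 i)) g

/-- Compositions `(I+Δ_1 Q_1)⋯(I+Δ_n Q_n)` of matrices from `𝒬` pointwise dominate the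
corresponding composition `(I+Δ_1 Q̲)∘⋯∘(I+Δ_n Q̲)` of the lower envelope, provided all
`Δ_i` lie in `[0,δ]` with `δ‖Q̲‖ ≤ 1`. -/
theorem stmt15 {X : Type*} [Fintype X] [Nonempty X]
    (𝒬 : Set (Matrix X X ℝ)) (hne : 𝒬.Nonempty)
    (hrate : ∀ Q ∈ 𝒬, IsRateMatrix Q)
    (hbdd : BddAbove (matNorm '' 𝒬))
    (δ : ℝ) (hδ : 0 < δ) (hδQ : δ * opNorm (lowerEnvOp 𝒬) ≤ 1)
    {n : ℕ} (Δ : Fin n → ℝ) (hΔ0 : ∀ i, 0 ≤ Δ i) (hΔδ : ∀ i, Δ i ≤ δ)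
    (Qs : Fin n → Matrix X X ℝ) (hQs : ∀ i, Qs i ∈ 𝒬)
    (f : X → ℝ) (x : X) :
    compFamily (fun i => fun g => g + Δ i • lowerEnvOp 𝒬 g) f x ≤
      compFamily (fun i => fun g => g + Δ i • (Qs i).mulVec g) f x :=
  stmt15_general 𝒬 hrate hbdd δ hδQ Δ hΔ0 hΔδ Qs hQs f x
end

section
/- Let Q̲ be a lower transition rate operator on ℝ^𝒳 and let t, s be reals with 0 ≤ t ≤ s. Then there is a unique lower transition operator L such that: for every ε > 0 there exists δ > 0 such that for every finite partition t = t_0 < t_1 < ⋯ < t_n = s of [t,s] with max_i (t_i − t_{i−1}) ≤ δ, one has ‖L − (I+Δ_1Q̲)∘(I+Δ_2Q̲)∘⋯∘(I+Δ_nQ̲)‖ ≤ ε, where Δ_i := t_i − t_{i−1} and for maps A, B : ℝ^𝒳 → ℝ^𝒳, ‖A − B‖ := sup{‖Af − Bf‖ : f ∈ ℝ^𝒳, ‖f‖ = 1}. (In case t = s, the only partition is the single point t and the empty composition is the identity operator.) -/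
open scoped BigOperators

/-- A lower transition operator on `ℝ^𝒳`: bounded below by the minimum (LT1),
super-additive (LT2), and non-negatively homogeneous (LT3). -/
def IsLowerTransitionOperator {X : Type*} [Fintype X] (T : (X → ℝ) → (X → ℝ)) : Prop :=
  (∀ f : X → ℝ, ∀ x : X, (⨅ y, f y) ≤ T f x) ∧
  (∀ f g : X → ℝ, ∀ x : X, T f x + T g x ≤ T (f + g) x) ∧
  (∀ c : ℝ, 0 ≤ c → ∀ f : X → ℝ, T (c • f) = c • T f)

/-- A lower transition rate operator on `ℝ^𝒳`: maps constants to zero (LR1), is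
nonnegative on off-diagonal indicators (LR2), super-additive (LR3), and
non-negatively homogeneous (LR4). -/
def IsLowerTransitionRateOperator {X : Type*} [Fintype X] [DecidableEq X]
    (Q : (X → ℝ) → (X → ℝ)) : Prop :=
  (∀ c : ℝ, Q (fun _ => c) = 0) ∧
  (∀ x y : X, y ≠ x → 0 ≤ Q (Pi.single y 1) x) ∧
  (∀ f g : X → ℝ, ∀ x : X, Q f x + Q g x ≤ Q (f + g) x) ∧
  (∀ c : ℝ, 0 ≤ c → ∀ f : X → ℝ, Q (c • f) = c • Q f)

/-- The distance `‖A − B‖ = sup{‖Af − Bf‖ : ‖f‖ = 1}` between two maps of `ℝ^𝒳`,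
where `‖·‖` is the supremum norm. -/
noncomputable def opDist {X : Type*} [Fintype X]
    (A B : (X → ℝ) → (X → ℝ)) : ℝ :=
  ⨆ f : {f : X → ℝ // ‖f‖ = 1}, ‖A f.1 - B f.1‖

/-!
Let `M` bound `-[Q̲𝟙ₓ](x)`. Writing a nonnegative `h` as `∑ h y 𝟙_y`, super-additivity and (LR2)
give `[Q̲h](x) ≥ -M h(x)`; hence `Q̲` is `2M`-Lipschitz, and `I + ΔQ̲` is a lower transition
operator (so `1`-Lipschitz) as soon as `ΔM ≤ 1`. For such steps the defect
`‖(I + (a+b)Q̲) - (I + aQ̲)(I + bQ̲)‖` is at most `(2M)² a b`. Zipping two step sequences of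
equal total length `r` and mesh at most `δ` together, splitting the longer of the two first steps
at each stage, bounds the distance of their Euler products by `2 (2M)² δ r`. The products along
uniform partitions are therefore Cauchy; their limit is a lower transition operator within
`2 (2M)² δ r` of every Euler product of mesh `δ`, and two operators approximated by the same
products coincide.
-/

open Filter Topology Set

section LowerTransitionOperator

variable {X : Type*} [Fintype X]

theorem neg_norm_le_iInf [Nonempty X] (f : X → ℝ) : -‖f‖ ≤ ⨅ y, f y :=
  le_ciInf fun y => neg_le_of_abs_le (norm_le_pi_norm f y)

theorem isLowerTransitionOperator_id : IsLowerTransitionOperator (id : (X → ℝ) → (X → ℝ)) :=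
  ⟨fun f x => ciInf_le (Finite.bddBelow_range f) x, fun _ _ _ => le_rfl, fun _ _ _ => rfl⟩

namespace IsLowerTransitionOperator

variable {T A B : (X → ℝ) → (X → ℝ)}

theorem map_zero (hT : IsLowerTransitionOperator T) : T 0 = 0 := by
  simpa using hT.2.2 0 le_rfl 0

theorem monotone (hT : IsLowerTransitionOperator T) : Monotone T := by
  intro f g hfg x
  have : Nonempty X := ⟨x⟩
  have h₁ := hT.2.1 (g - f) f x
  have h₂ := hT.1 (g - f) x
  have h₃ : 0 ≤ ⨅ y, (g - f) y := le_ciInf fun y => sub_nonneg.2 (hfg y)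
  rw [sub_add_cancel] at h₁
  linarith

theorem neg_norm_sub_le_sub (hT : IsLowerTransitionOperator T) (f g : X → ℝ) (x : X) :
    -‖f - g‖ ≤ T f x - T g x := by
  have : Nonempty X := ⟨x⟩
  have h₁ := hT.2.1 (f - g) g x
  have h₂ := hT.1 (f - g) x
  rw [sub_add_cancel] at h₁
  linarith [neg_norm_le_iInf (f - g)]

theorem norm_map_sub_map_le (hT : IsLowerTransitionOperator T) (f g : X → ℝ) :
    ‖T f - T g‖ ≤ ‖f - g‖ := by
  refine (pi_norm_le_iff_of_nonneg (norm_nonneg _)).2 fun x => ?_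
  rw [Pi.sub_apply, Real.norm_eq_abs, abs_le]
  exact ⟨hT.neg_norm_sub_le_sub f g x,
    by linarith [hT.neg_norm_sub_le_sub g f x, norm_sub_rev f g]⟩

theorem norm_map_le (hT : IsLowerTransitionOperator T) (f : X → ℝ) : ‖T f‖ ≤ ‖f‖ := by
  simpa [hT.map_zero] using hT.norm_map_sub_map_le f 0

theorem comp (hA : IsLowerTransitionOperator A) (hB : IsLowerTransitionOperator B) :
    IsLowerTransitionOperator (A ∘ B) := by
  refine ⟨fun f x => ?_, fun f g x => ?_, fun c hc f => ?_⟩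
  · have : Nonempty X := ⟨x⟩
    exact (le_ciInf fun y => hB.1 f y).trans (hA.1 (B f) x)
  · exact (hA.2.1 (B f) (B g) x).trans (hA.monotone (fun y => hB.2.1 f g y) x)
  · simp only [Function.comp_def, hB.2.2 c hc, hA.2.2 c hc]

theorem of_tendsto {ι : Type*} {l : Filter ι} [l.NeBot] {T : ι → (X → ℝ) → (X → ℝ)}
    {L : (X → ℝ) → (X → ℝ)} (hT : ∀ᶠ i in l, IsLowerTransitionOperator (T i))
    (hL : ∀ f, Tendsto (fun i => T i f) l (𝓝 (L f))) : IsLowerTransitionOperator L := by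
  have hLx : ∀ f x, Tendsto (fun i => T i f x) l (𝓝 (L f x)) :=
    fun f x => tendsto_pi_nhds.1 (hL f) x
  refine ⟨fun f x => ?_, fun f g x => ?_, fun c hc f => ?_⟩
  · exact ge_of_tendsto (hLx f x) (hT.mono fun i hi => hi.1 f x)
  · exact le_of_tendsto_of_tendsto ((hLx f x).add (hLx g x)) (hLx (f + g) x)
      (hT.mono fun i hi => hi.2.1 f g x)
  · exact tendsto_nhds_unique (hL (c • f))
      (((hL f).const_smul c).congr' (hT.mono fun i hi => (hi.2.2 c hc f).symm))

theorem ext_of_norm_eq_one (hA : IsLowerTransitionOperator A) (hB : IsLowerTransitionOperator B)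
    (h : ∀ f : X → ℝ, ‖f‖ = 1 → A f = B f) : A = B := by
  funext f
  rcases eq_or_ne f 0 with rfl | hf
  · rw [hA.map_zero, hB.map_zero]
  · rw [← smul_inv_smul₀ (norm_ne_zero_iff.2 hf) f, hA.2.2 _ (norm_nonneg f),
      hB.2.2 _ (norm_nonneg f),
      h _ (by rw [norm_smul, norm_inv, norm_norm, inv_mul_cancel₀ (norm_ne_zero_iff.2 hf)])]

theorem norm_sub_le_opDist (hA : IsLowerTransitionOperator A) (hB : IsLowerTransitionOperator B)
    {f : X → ℝ} (hf : ‖f‖ = 1) : ‖A f - B f‖ ≤ opDist A B := by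
  refine le_ciSup (f := fun g : {g : X → ℝ // ‖g‖ = 1} => ‖A g.1 - B g.1‖) ⟨2, ?_⟩ ⟨f, hf⟩
  rintro _ ⟨g, rfl⟩
  linarith [norm_sub_le (A g.1) (B g.1), hA.norm_map_le g.1, hB.norm_map_le g.1, g.2]

theorem eq_of_forall_opDist_le (hA : IsLowerTransitionOperator A)
    (hB : IsLowerTransitionOperator B)
    (h : ∀ ε > 0, ∃ P, IsLowerTransitionOperator P ∧ opDist A P ≤ ε ∧ opDist B P ≤ ε) :
    A = B := by
  refine hA.ext_of_norm_eq_one hB fun f hf => ?_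
  rw [← sub_eq_zero, ← norm_le_zero_iff]
  refine le_of_forall_pos_le_add fun ε hε => ?_
  obtain ⟨P, hP, hAP, hBP⟩ := h (ε / 2) (half_pos hε)
  calc ‖A f - B f‖ ≤ ‖A f - P f‖ + ‖B f - P f‖ := by
        simpa only [norm_sub_rev (P f)] using norm_sub_le_norm_sub_add_norm_sub (A f) (P f) (B f)
    _ ≤ opDist A P + opDist B P :=
        add_le_add (hA.norm_sub_le_opDist hP hf) (hB.norm_sub_le_opDist hP hf)
    _ ≤ 0 + ε := by linarith

end IsLowerTransitionOperator

theorem opDist_le {A B : (X → ℝ) → (X → ℝ)} {c : ℝ} (hc : 0 ≤ c)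
    (h : ∀ f : X → ℝ, ‖f‖ = 1 → ‖A f - B f‖ ≤ c) : opDist A B ≤ c :=
  Real.iSup_le (fun f => h f.1 f.2) hc

end LowerTransitionOperator

section RateOperator

variable {X : Type*} [Fintype X] [DecidableEq X] {Q : (X → ℝ) → (X → ℝ)}

/-- Any upper bound of `-[Q 𝟙ₓ](x)` over `x` would serve; this one is nonnegative by
construction. -/
noncomputable def diagBound (Q : (X → ℝ) → (X → ℝ)) : ℝ := ‖fun x => Q (Pi.single x 1) x‖

theorem diagBound_nonneg : 0 ≤ diagBound Q := norm_nonneg _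

namespace IsLowerTransitionRateOperator

theorem map_zero (hQ : IsLowerTransitionRateOperator Q) : Q 0 = 0 := hQ.1 0

theorem map_add_const (hQ : IsLowerTransitionRateOperator Q) (f : X → ℝ) (c : ℝ) :
    Q (f + fun _ => c) = Q f := by
  funext x
  have h₁ := hQ.2.2.1 f (fun _ => c) x
  have h₂ := hQ.2.2.1 (f + fun _ => c) (fun _ => -c) x
  rw [add_assoc, show ((fun _ => c) + fun _ => -c : X → ℝ) = 0 by ext; simp, add_zero] at h₂
  simp only [hQ.1, Pi.zero_apply] at h₁ h₂
  linarith

theorem sum_le (hQ : IsLowerTransitionRateOperator Q) {ι : Type*} (s : Finset ι)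
    (g : ι → X → ℝ) (x : X) :
    ∑ i ∈ s, Q (g i) x ≤ Q (∑ i ∈ s, g i) x := by
  have := Finset.le_sum_of_subadditive (fun f => -Q f x) (by simp [hQ.map_zero])
    (fun f g => by linarith [hQ.2.2.1 f g x]) s g
  simpa [Finset.sum_neg_distrib] using this

theorem neg_mul_diagBound_le (hQ : IsLowerTransitionRateOperator Q) {h : X → ℝ} (hh : 0 ≤ h)
    (x : X) :
    -(h x * diagBound Q) ≤ Q h x := by
  have hdiag : -diagBound Q ≤ Q (Pi.single x 1) x :=
    neg_le_of_abs_le (norm_le_pi_norm (fun x => Q (Pi.single x 1) x) x)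
  calc -(h x * diagBound Q) ≤ h x * Q (Pi.single x 1) x := by
        linarith [mul_le_mul_of_nonneg_left hdiag (hh x)]
    _ ≤ ∑ y, h y * Q (Pi.single y 1) x := by
        rw [← Finset.add_sum_erase _ _ (Finset.mem_univ x)]
        exact le_add_of_nonneg_right <| Finset.sum_nonneg fun y hy =>
          mul_nonneg (hh y) (hQ.2.1 x y (Finset.ne_of_mem_erase hy))
    _ = ∑ y, Q (h y • Pi.single y 1) x := by simp [hQ.2.2.2 _ (hh _)]
    _ ≤ Q (∑ y, h y • Pi.single y 1) x := hQ.sum_le _ _ x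
    _ = Q h x := by simp [← Pi.single_smul', Finset.univ_sum_single]

theorem neg_two_mul_diagBound_mul_norm_le (hQ : IsLowerTransitionRateOperator Q)
    (f : X → ℝ) (x : X) :
    -(2 * diagBound Q * ‖f‖) ≤ Q f x := by
  have hf : ∀ y, |f y| ≤ ‖f‖ := norm_le_pi_norm f
  have := hQ.neg_mul_diagBound_le (h := f + fun _ => ‖f‖)
    (fun y => by simp only [Pi.zero_apply, Pi.add_apply]; linarith [neg_abs_le (f y), hf y]) x
  rw [hQ.map_add_const] at this
  simp only [Pi.add_apply] at this
  have hfx : f x + ‖f‖ ≤ 2 * ‖f‖ := by linarith [le_abs_self (f x), hf x]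
  linarith [mul_le_mul_of_nonneg_right hfx (diagBound_nonneg (Q := Q))]

theorem norm_map_sub_map_le (hQ : IsLowerTransitionRateOperator Q) (f g : X → ℝ) :
    ‖Q f - Q g‖ ≤ 2 * diagBound Q * ‖f - g‖ := by
  have key : ∀ f g : X → ℝ, ∀ x, -(2 * diagBound Q * ‖f - g‖) ≤ Q f x - Q g x := by
    intro f g x
    have h := hQ.2.2.1 (f - g) g x
    rw [sub_add_cancel] at h
    linarith [hQ.neg_two_mul_diagBound_mul_norm_le (f - g) x]
  have hM := diagBound_nonneg (Q := Q)
  refine (pi_norm_le_iff_of_nonneg (by positivity)).2 fun x => ?_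
  rw [Pi.sub_apply, Real.norm_eq_abs, abs_le]
  have := key g f x
  rw [norm_sub_rev] at this
  exact ⟨key f g x, by linarith⟩

theorem norm_map_le (hQ : IsLowerTransitionRateOperator Q) (f : X → ℝ) :
    ‖Q f‖ ≤ 2 * diagBound Q * ‖f‖ := by
  simpa [hQ.map_zero] using hQ.norm_map_sub_map_le f 0

end IsLowerTransitionRateOperator

end RateOperator

section Euler

variable {X : Type*} {Q : (X → ℝ) → (X → ℝ)}

def eulerStep (Q : (X → ℝ) → (X → ℝ)) (Δ : ℝ) : (X → ℝ) → (X → ℝ) := fun g => g + Δ • Q g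

def eulerComp (Q : (X → ℝ) → (X → ℝ)) (l : List ℝ) : (X → ℝ) → (X → ℝ) :=
  l.foldr (fun Δ T => eulerStep Q Δ ∘ T) id

@[simp] theorem eulerComp_nil : eulerComp Q [] = id := rfl

@[simp] theorem eulerComp_cons (Δ : ℝ) (l : List ℝ) :
    eulerComp Q (Δ :: l) = eulerStep Q Δ ∘ eulerComp Q l := rfl

theorem compFamily_eulerStep {n : ℕ} (Δ : Fin n → ℝ) :
    compFamily (fun i => eulerStep Q (Δ i)) = eulerComp Q (List.ofFn Δ) := by
  rw [compFamily, eulerComp, ← Function.comp_def (eulerStep Q), ← List.map_ofFn, List.foldr_map]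

theorem eulerComp_eq_id_of_sum_eq_zero {l : List ℝ} (hl : ∀ a ∈ l, 0 ≤ a)
    (hsum : l.sum = 0) :
    eulerComp Q l = id := by
  induction l with
  | nil => rfl
  | cons a l ih =>
    simp only [List.forall_mem_cons] at hl
    have hl₀ : 0 ≤ l.sum := List.sum_nonneg hl.2
    rw [List.sum_cons] at hsum
    have ha : a = 0 := by linarith [hl.1]
    rw [eulerComp_cons, ih hl.2 (by linarith [hl.1]), ha]
    funext g
    simp [eulerStep]

variable [Fintype X] [DecidableEq X]

theorem isLowerTransitionOperator_eulerStep (hQ : IsLowerTransitionRateOperator Q) {Δ : ℝ}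
    (hΔ : 0 ≤ Δ) (hΔM : Δ * diagBound Q ≤ 1) : IsLowerTransitionOperator (eulerStep Q Δ) := by
  refine ⟨fun f x => ?_, fun f g x => ?_, fun c hc f => ?_⟩
  · set m := ⨅ y, f y
    have hm : ∀ y, m ≤ f y := fun y => ciInf_le (Finite.bddBelow_range f) y
    have hQf : Q f = Q (f - fun _ => m) := by
      rw [← hQ.map_add_const (f - fun _ => m) m, sub_add_cancel]
    have hlow := hQ.neg_mul_diagBound_le (h := f - fun _ => m) (fun y => sub_nonneg.2 (hm y)) x
    simp only [eulerStep, Pi.add_apply, Pi.smul_apply, smul_eq_mul, hQf]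
    simp only [Pi.sub_apply] at hlow ⊢
    -- `ΔQ̲f(x) ≥ -ΔM (f x - m) ≥ -(f x - m)`
    nlinarith [mul_le_mul_of_nonneg_left hlow hΔ,
      mul_nonneg (sub_nonneg.2 (hm x)) (sub_nonneg.2 hΔM)]
  · simp only [eulerStep, Pi.add_apply, Pi.smul_apply, smul_eq_mul]
    nlinarith [mul_le_mul_of_nonneg_left (hQ.2.2.1 f g x) hΔ]
  · simp only [eulerStep, hQ.2.2.2 c hc, smul_add, smul_comm Δ c]

theorem isLowerTransitionOperator_eulerComp (hQ : IsLowerTransitionRateOperator Q) {δ : ℝ}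
    (hδ : δ * diagBound Q ≤ 1) {l : List ℝ} (hl : ∀ a ∈ l, a ∈ Icc 0 δ) :
    IsLowerTransitionOperator (eulerComp Q l) := by
  induction l with
  | nil => exact isLowerTransitionOperator_id
  | cons a l ih =>
    simp only [List.forall_mem_cons] at hl
    have haM : a * diagBound Q ≤ 1 :=
      (mul_le_mul_of_nonneg_right hl.1.2 diagBound_nonneg).trans hδ
    exact (isLowerTransitionOperator_eulerStep hQ hl.1.1 haM).comp (ih hl.2)

theorem norm_eulerStep_add_sub_le (hQ : IsLowerTransitionRateOperator Q) {a b : ℝ}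
    (ha : 0 ≤ a) (hb : 0 ≤ b) (f : X → ℝ) :
    ‖eulerStep Q (a + b) f - eulerStep Q a (eulerStep Q b f)‖ ≤
      (2 * diagBound Q) ^ 2 * a * b * ‖f‖ := by
  have hM := diagBound_nonneg (Q := Q)
  have hdefect : eulerStep Q (a + b) f - eulerStep Q a (eulerStep Q b f) =
      a • (Q f - Q (eulerStep Q b f)) := by
    simp only [eulerStep]
    module
  rw [hdefect, norm_smul, Real.norm_of_nonneg ha]
  calc a * ‖Q f - Q (eulerStep Q b f)‖
      ≤ a * (2 * diagBound Q * ‖f - eulerStep Q b f‖) := by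
        gcongr; exact hQ.norm_map_sub_map_le _ _
    _ = a * (2 * diagBound Q * (b * ‖Q f‖)) := by
        rw [eulerStep, sub_add_cancel_left, norm_neg, norm_smul, Real.norm_of_nonneg hb]
    _ ≤ a * (2 * diagBound Q * (b * (2 * diagBound Q * ‖f‖))) := by
        gcongr; exact hQ.norm_map_le f
    _ = (2 * diagBound Q) ^ 2 * a * b * ‖f‖ := by ring

theorem norm_eulerComp_cons_sub_le (hQ : IsLowerTransitionRateOperator Q) {δ a b : ℝ}
    (hδ : δ * diagBound Q ≤ 1) (ha : 0 ≤ a) (hab : a ≤ b) (hb : b ≤ δ) {d e : List ℝ}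
    (he : ∀ x ∈ e, x ∈ Icc 0 δ) (f : X → ℝ) :
    ‖eulerComp Q (a :: d) f - eulerComp Q (b :: e) f‖ ≤
      ‖eulerComp Q d f - eulerComp Q ((b - a) :: e) f‖ +
        (2 * diagBound Q) ^ 2 * a * (b - a) * ‖f‖ := by
  have hstep := isLowerTransitionOperator_eulerStep hQ ha
    ((mul_le_mul_of_nonneg_right (hab.trans hb) diagBound_nonneg).trans hδ)
  set g := eulerComp Q e f
  have hg : ‖g‖ ≤ ‖f‖ := (isLowerTransitionOperator_eulerComp hQ hδ he).norm_map_le f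
  have hsplit := norm_eulerStep_add_sub_le hQ ha (sub_nonneg.2 hab) g
  rw [add_sub_cancel] at hsplit
  simp only [eulerComp_cons, Function.comp_apply]
  calc _ ≤ ‖eulerStep Q a (eulerComp Q d f) - eulerStep Q a (eulerStep Q (b - a) g)‖
        + ‖eulerStep Q a (eulerStep Q (b - a) g) - eulerStep Q b g‖ :=
        norm_sub_le_norm_sub_add_norm_sub _ _ _
    _ ≤ _ := by
        gcongr
        · exact hstep.norm_map_sub_map_le _ _
        · rw [norm_sub_rev]
          exact hsplit.trans (by gcongr)

theorem norm_eulerComp_sub_eulerComp_le (hQ : IsLowerTransitionRateOperator Q) {δ : ℝ}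
    (hδ : δ * diagBound Q ≤ 1) :
    ∀ d e : List ℝ, (∀ x ∈ d, x ∈ Icc 0 δ) → (∀ x ∈ e, x ∈ Icc 0 δ) → d.sum = e.sum →
      ∀ f : X → ℝ, ‖eulerComp Q d f - eulerComp Q e f‖ ≤
        2 * (2 * diagBound Q) ^ 2 * δ * d.sum * ‖f‖
  | [], e, _, he, hsum, f => by
    rw [eulerComp_eq_id_of_sum_eq_zero (fun x hx => (he x hx).1) (by simpa using hsum.symm)]
    simp
  | d, [], hd, _, hsum, f => by
    rw [eulerComp_eq_id_of_sum_eq_zero (fun x hx => (hd x hx).1) (by simpa using hsum)]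
    simp [show d.sum = 0 by simpa using hsum]
  | a :: d, b :: e, hd, he, hsum, f => by
    simp only [List.forall_mem_cons, List.sum_cons] at hd he hsum ⊢
    obtain ⟨⟨ha, haδ⟩, hd⟩ := hd
    obtain ⟨⟨hb, hbδ⟩, he⟩ := he
    have hK : 0 ≤ (2 * diagBound Q) ^ 2 := sq_nonneg _
    rcases le_total a b with hab | hba
    · have ih := norm_eulerComp_sub_eulerComp_le hQ hδ d ((b - a) :: e) hd
        (List.forall_mem_cons.2 ⟨⟨sub_nonneg.2 hab, by linarith⟩, he⟩)
        (by simp only [List.sum_cons]; linarith) f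
      have hcons := norm_eulerComp_cons_sub_le hQ hδ ha hab hbδ he (d := d) f
      have : (2 * diagBound Q) ^ 2 * a * (b - a) * ‖f‖ ≤
          (2 * diagBound Q) ^ 2 * a * δ * ‖f‖ := by
        gcongr
        linarith
      linarith [mul_nonneg (mul_nonneg (mul_nonneg hK ha) (ha.trans haδ)) (norm_nonneg f)]
    · have ih := norm_eulerComp_sub_eulerComp_le hQ hδ ((a - b) :: d) e
        (List.forall_mem_cons.2 ⟨⟨sub_nonneg.2 hba, by linarith⟩, hd⟩) he
        (by simp only [List.sum_cons]; linarith) f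
      have hcons := norm_eulerComp_cons_sub_le hQ hδ hb hba haδ hd (d := e) f
      rw [norm_sub_rev, norm_sub_rev (eulerComp Q e f)] at hcons
      simp only [List.sum_cons] at ih
      have : (2 * diagBound Q) ^ 2 * b * (a - b) * ‖f‖ ≤
          (2 * diagBound Q) ^ 2 * b * δ * ‖f‖ := by
        gcongr
        linarith
      linarith [mul_nonneg (mul_nonneg (mul_nonneg hK hb) (hb.trans hbδ)) (norm_nonneg f)]
termination_by d e => d.length + e.length

noncomputable def uniformSteps (r : ℝ) (n : ℕ) : List ℝ := List.replicate (n + 1) (r / (n + 1))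

theorem sum_uniformSteps (r : ℝ) (n : ℕ) : (uniformSteps r n).sum = r := by
  simp only [uniformSteps, List.sum_replicate, nsmul_eq_mul, Nat.cast_add_one]
  field_simp

theorem uniformSteps_mem_Icc {r δ : ℝ} (hr : 0 ≤ r) {n : ℕ} (hn : r / (n + 1) ≤ δ) :
    ∀ x ∈ uniformSteps r n, x ∈ Icc 0 δ := by
  intro x hx
  rw [List.eq_of_mem_replicate hx]
  exact ⟨by positivity, hn⟩

theorem tendsto_div_add_one_atTop (r : ℝ) :
    Tendsto (fun n : ℕ => r / (n + 1)) atTop (𝓝 0) := by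
  simpa [div_eq_mul_inv] using tendsto_one_div_add_atTop_nhds_zero_nat.const_mul r

theorem antitone_div_add_one {r : ℝ} (hr : 0 ≤ r) : Antitone fun n : ℕ => r / (n + 1) :=
  fun _ _ h => div_le_div_of_nonneg_left hr (by positivity) (by gcongr)

noncomputable def eulerLimit (Q : (X → ℝ) → (X → ℝ)) (r : ℝ) : (X → ℝ) → (X → ℝ) :=
  fun f => limUnder atTop fun n => eulerComp Q (uniformSteps r n) f

theorem cauchySeq_eulerComp_uniformSteps (hQ : IsLowerTransitionRateOperator Q) {r : ℝ}
    (hr : 0 ≤ r) (f : X → ℝ) : CauchySeq fun n => eulerComp Q (uniformSteps r n) f := by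
  rw [Metric.cauchySeq_iff']
  intro ε hε
  have hη := tendsto_div_add_one_atTop r
  obtain ⟨N, hNM, hNε⟩ :=
    ((hη.mul_const (diagBound Q)).eventually_le_const (u := 1) (by simp)).and
      (((hη.const_mul (2 * (2 * diagBound Q) ^ 2)).mul_const (r * ‖f‖)).eventually_lt_const
        (by simpa using hε)) |>.exists
  refine ⟨N, fun n hn => ?_⟩
  rw [dist_eq_norm]
  calc _ ≤ 2 * (2 * diagBound Q) ^ 2 * (r / (N + 1)) * (uniformSteps r n).sum * ‖f‖ :=
        norm_eulerComp_sub_eulerComp_le hQ hNM _ _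
          (uniformSteps_mem_Icc hr (antitone_div_add_one hr hn))
          (uniformSteps_mem_Icc hr le_rfl) (by rw [sum_uniformSteps, sum_uniformSteps]) f
    _ < ε := by rw [sum_uniformSteps, mul_assoc _ r]; exact hNε

theorem tendsto_eulerComp_uniformSteps (hQ : IsLowerTransitionRateOperator Q) {r : ℝ}
    (hr : 0 ≤ r) (f : X → ℝ) :
    Tendsto (fun n => eulerComp Q (uniformSteps r n) f) atTop (𝓝 (eulerLimit Q r f)) :=
  (cauchySeq_eulerComp_uniformSteps hQ hr f).tendsto_limUnder

theorem isLowerTransitionOperator_eulerLimit (hQ : IsLowerTransitionRateOperator Q) {r : ℝ}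
    (hr : 0 ≤ r) : IsLowerTransitionOperator (eulerLimit Q r) := by
  refine .of_tendsto ?_ (tendsto_eulerComp_uniformSteps hQ hr)
  filter_upwards [((tendsto_div_add_one_atTop r).mul_const (diagBound Q)).eventually_le_const
    (u := 1) (by simp)] with n hn
  exact isLowerTransitionOperator_eulerComp hQ hn (uniformSteps_mem_Icc hr le_rfl)

theorem norm_eulerLimit_sub_eulerComp_le (hQ : IsLowerTransitionRateOperator Q) {δ : ℝ}
    (hδ₀ : 0 < δ) (hδ : δ * diagBound Q ≤ 1) {l : List ℝ} (hl : ∀ x ∈ l, x ∈ Icc 0 δ)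
    (f : X → ℝ) :
    ‖eulerLimit Q l.sum f - eulerComp Q l f‖ ≤ 2 * (2 * diagBound Q) ^ 2 * δ * l.sum * ‖f‖ := by
  have hr : 0 ≤ l.sum := List.sum_nonneg fun x hx => (hl x hx).1
  refine le_of_tendsto ((tendsto_eulerComp_uniformSteps hQ hr f).sub_const _).norm ?_
  filter_upwards [(tendsto_div_add_one_atTop l.sum).eventually_le_const hδ₀] with n hn
  simpa [sum_uniformSteps] using norm_eulerComp_sub_eulerComp_le hQ hδ _ l
    (uniformSteps_mem_Icc hr hn) hl (sum_uniformSteps _ n) f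

theorem sum_ofFn_sub_castSucc {n : ℕ} (u : Fin (n + 1) → ℝ) :
    (List.ofFn fun i : Fin n => u i.succ - u i.castSucc).sum = u (Fin.last n) - u 0 := by
  rw [List.sum_ofFn, Finset.sum_sub_distrib]
  linarith [Fin.sum_univ_succ u, Fin.sum_univ_castSucc u]

theorem ofFn_sub_castSucc_mem_Icc {n : ℕ} {u : Fin (n + 1) → ℝ} (hu : Monotone u) {δ : ℝ}
    (hδ : ∀ i : Fin n, u i.succ - u i.castSucc ≤ δ) :
    ∀ x ∈ List.ofFn (fun i : Fin n => u i.succ - u i.castSucc), x ∈ Icc 0 δ :=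
  List.forall_mem_ofFn_iff.2 fun i => ⟨sub_nonneg.2 (hu Fin.castSucc_lt_succ.le), hδ i⟩

theorem exists_partition_steps_le {t s δ : ℝ} (hts : t ≤ s) (hδ : 0 < δ) :
    ∃ (n : ℕ) (u : Fin (n + 1) → ℝ), StrictMono u ∧ u 0 = t ∧ u (Fin.last n) = s ∧
      ∀ i : Fin n, u i.succ - u i.castSucc ≤ δ := by
  rcases hts.eq_or_lt with rfl | hts
  · exact ⟨0, fun _ => t, Fin.strictMono_iff_lt_succ.2 Fin.elim0, rfl, rfl, Fin.elim0⟩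
  set n := ⌈(s - t) / δ⌉₊
  have hn : (0 : ℝ) < n := Nat.cast_pos.2 (Nat.ceil_pos.2 (div_pos (sub_pos.2 hts) hδ))
  set u : Fin (n + 1) → ℝ := fun i => t + i * ((s - t) / n)
  have hstep : ∀ i : Fin n, u i.succ - u i.castSucc = (s - t) / n := fun i => by
    simp only [u, Fin.val_succ, Fin.val_castSucc, Nat.cast_add_one]
    ring
  refine ⟨n, u, Fin.strictMono_iff_lt_succ.2 fun i => ?_, by simp [u], ?_, fun i => ?_⟩
  · linarith [hstep i, div_pos (sub_pos.2 hts) hn]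
  · simp only [u, Fin.val_last]
    field_simp
    ring
  · rw [hstep, div_le_iff₀ hn]
    linarith [(div_le_iff₀ hδ).1 (Nat.le_ceil ((s - t) / δ))]

theorem isLowerTransitionOperator_compFamily_eulerStep (hQ : IsLowerTransitionRateOperator Q)
    {δ : ℝ} (hδ : δ * diagBound Q ≤ 1) {n : ℕ} {u : Fin (n + 1) → ℝ} (hu : Monotone u)
    (hstep : ∀ i : Fin n, u i.succ - u i.castSucc ≤ δ) :
    IsLowerTransitionOperator
      (compFamily fun i : Fin n => eulerStep Q (u i.succ - u i.castSucc)) := by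
  rw [compFamily_eulerStep]
  exact isLowerTransitionOperator_eulerComp hQ hδ (ofFn_sub_castSucc_mem_Icc hu hstep)

theorem opDist_eulerLimit_compFamily_eulerStep_le (hQ : IsLowerTransitionRateOperator Q)
    {δ : ℝ} (hδ₀ : 0 < δ) (hδ : δ * diagBound Q ≤ 1) {n : ℕ} {u : Fin (n + 1) → ℝ}
    (hu : Monotone u) (hstep : ∀ i : Fin n, u i.succ - u i.castSucc ≤ δ) :
    opDist (eulerLimit Q (u (Fin.last n) - u 0))
        (compFamily fun i : Fin n => eulerStep Q (u i.succ - u i.castSucc)) ≤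
      2 * (2 * diagBound Q) ^ 2 * δ * (u (Fin.last n) - u 0) := by
  have hl := ofFn_sub_castSucc_mem_Icc hu hstep
  rw [compFamily_eulerStep, ← sum_ofFn_sub_castSucc]
  refine opDist_le ?_ fun f hf => ?_
  · have := List.sum_nonneg fun x hx => (hl x hx).1
    positivity
  · simpa [hf] using norm_eulerLimit_sub_eulerComp_le hQ hδ₀ hδ hl f

end Euler

theorem exists_pos_mul_le_one_and_mul_le {a b ε : ℝ} (ha : 0 ≤ a) (hb : 0 ≤ b) (hε : 0 < ε) :
    ∃ δ > 0, δ * a ≤ 1 ∧ δ * b ≤ ε := by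
  set δ := min (1 / (a + 1)) (ε / (b + 1))
  have hδ : 0 < δ := by positivity
  refine ⟨δ, hδ, ?_, ?_⟩
  · nlinarith [(le_div_iff₀ (by positivity)).1 (min_le_left _ _ : δ ≤ 1 / (a + 1))]
  · nlinarith [(le_div_iff₀ (by positivity)).1 (min_le_right _ _ : δ ≤ ε / (b + 1))]

theorem exists_pos_forall_opDist_eulerLimit_le {X : Type*} [Fintype X] [DecidableEq X]
    {Q : (X → ℝ) → (X → ℝ)} (hQ : IsLowerTransitionRateOperator Q) {t s ε : ℝ} (hts : t ≤ s)
    (hε : 0 < ε) :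
    ∃ δ > 0, δ * diagBound Q ≤ 1 ∧
      ∀ (n : ℕ) (u : Fin (n + 1) → ℝ), Monotone u → u 0 = t → u (Fin.last n) = s →
        (∀ i : Fin n, u i.succ - u i.castSucc ≤ δ) →
        opDist (eulerLimit Q (s - t))
          (compFamily fun i : Fin n => eulerStep Q (u i.succ - u i.castSucc)) ≤ ε := by
  obtain ⟨δ, hδ₀, hδM, hδε⟩ := exists_pos_mul_le_one_and_mul_le (diagBound_nonneg (Q := Q))
    (by have := sub_nonneg.2 hts; positivity : 0 ≤ 2 * (2 * diagBound Q) ^ 2 * (s - t)) hε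
  refine ⟨δ, hδ₀, hδM, fun n u hu hu0 hus hstep => ?_⟩
  subst hu0 hus
  exact (opDist_eulerLimit_compFamily_eulerStep_le hQ hδ₀ hδM hu hstep).trans (by linarith)

theorem stmt18_general {X : Type*} [Fintype X] [DecidableEq X]
    (Ql : (X → ℝ) → (X → ℝ)) (hQl : IsLowerTransitionRateOperator Ql)
    (t s : ℝ) (hts : t ≤ s) :
    ∃! L : (X → ℝ) → (X → ℝ), IsLowerTransitionOperator L ∧
      ∀ ε : ℝ, 0 < ε → ∃ δ : ℝ, 0 < δ ∧
        ∀ (n : ℕ) (u : Fin (n + 1) → ℝ), StrictMono u →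
          u 0 = t → u (Fin.last n) = s →
          (∀ i : Fin n, u i.succ - u i.castSucc ≤ δ) →
          opDist L
            (compFamily (fun i : Fin n =>
              fun g => g + (u i.succ - u i.castSucc) • Ql g)) ≤ ε := by
  have hL := isLowerTransitionOperator_eulerLimit hQl (sub_nonneg.2 hts)
  refine ⟨eulerLimit Ql (s - t), ⟨hL, fun ε hε => ?_⟩, ?_⟩
  · obtain ⟨δ, hδ₀, -, h⟩ := exists_pos_forall_opDist_eulerLimit_le hQl hts hε
    exact ⟨δ, hδ₀, fun n u hu => h n u hu.monotone⟩
  rintro L ⟨hL', hL'approx⟩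
  refine hL'.eq_of_forall_opDist_le hL fun ε hε => ?_
  obtain ⟨δ₁, hδ₁, h₁⟩ := hL'approx ε hε
  obtain ⟨δ₂, hδ₂, hδM, h₂⟩ := exists_pos_forall_opDist_eulerLimit_le hQl hts hε
  obtain ⟨n, u, hu, hu0, hus, hstep⟩ := exists_partition_steps_le hts (lt_min hδ₁ hδ₂)
  have hstep₁ (i : Fin n) : u i.succ - u i.castSucc ≤ δ₁ := (hstep i).trans (min_le_left _ _)
  have hstep₂ (i : Fin n) : u i.succ - u i.castSucc ≤ δ₂ := (hstep i).trans (min_le_right _ _)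
  exact ⟨_, isLowerTransitionOperator_compFamily_eulerStep hQl hδM hu.monotone hstep₂,
    h₁ n u hu hu0 hus hstep₁, h₂ n u hu.monotone hu0 hus hstep₂⟩

/-- For any lower transition rate operator `Q̲` and `0 ≤ t ≤ s`, there is a unique lower
transition operator `L` that is approximated, to within any `ε`, by the compositions
`(I+Δ_1Q̲)∘⋯∘(I+Δ_nQ̲)` over all sufficiently fine partitions `t = t_0 < ⋯ < t_n = s`. -/
theorem stmt18 {X : Type*} [Fintype X] [Nonempty X] [DecidableEq X]
    (Ql : (X → ℝ) → (X → ℝ)) (hQl : IsLowerTransitionRateOperator Ql)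
    (t s : ℝ) (ht : 0 ≤ t) (hts : t ≤ s) :
    ∃! L : (X → ℝ) → (X → ℝ), IsLowerTransitionOperator L ∧
      ∀ ε : ℝ, 0 < ε → ∃ δ : ℝ, 0 < δ ∧
        ∀ (n : ℕ) (u : Fin (n + 1) → ℝ), StrictMono u →
          u 0 = t → u (Fin.last n) = s →
          (∀ i : Fin n, u i.succ - u i.castSucc ≤ δ) →
          opDist L
            (compFamily (fun i : Fin n =>
              fun g => g + (u i.succ - u i.castSucc) • Ql g)) ≤ ε :=
  stmt18_general Ql hQl t s hts
end
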